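/- arXiv:1806.08965 — 2 statements merged into one kernel-verified Lean document; each statement's English description precedes it below -/
import Mathlib

section
/- The set {q ∈ {0,1,2,3}^3 : q differs from a fixed point p in at most 2 coordinates} is a geometric hyperplane of S_3(3): every line of S_3(3) either lies fully in this set or meets it in exactly one point. -/
/-!
A point is at Hamming distance at most `n - 1` from `p` exactly when it agrees with `p` in some
coordinate. A line varying coordinate `i` with the other coordinates fixed to those of `c` either
has `c` agreeing with `p` off `i`, and then lies in the set, or it does not, and then its only point
in the set is `c` with coordinate `i` replaced by `p i`.
-/

def CubeIsLine (L : Set (Fin 3 → Fin 4)) : Prop :=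
  ∃ (i : Fin 3) (c : Fin 3 → Fin 4), L = {p | ∀ j, j ≠ i → p j = c j}

section

variable {ι α : Type*}

theorem hammingDist_lt_card_iff_exists_eq [Fintype ι] [DecidableEq α] {x y : ι → α} :
    hammingDist x y < Fintype.card ι ↔ ∃ i, x i = y i := by
  rw [hammingDist, Finset.card_lt_iff_ne_univ, Ne, Finset.filter_eq_self]
  simp

def singularHyperplane (p : ι → α) : Set (ι → α) := {q | ∃ i, q i = p i}

theorem singularHyperplane_ne_univ [Nontrivial α] (p : ι → α) :
    singularHyperplane p ≠ Set.univ := by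
  choose q hq using fun i => exists_ne (p i)
  exact fun h => (h.symm ▸ Set.mem_univ q : q ∈ singularHyperplane p).elim fun i hi => hq i hi

theorem line_subset_singularHyperplane {p c : ι → α} {i j : ι} (hji : j ≠ i)
    (hj : c j = p j) :
    {q | ∀ k, k ≠ i → q k = c k} ⊆ singularHyperplane p :=
  fun _ hq => ⟨j, (hq j hji).trans hj⟩

theorem line_inter_singularHyperplane_eq [DecidableEq ι] {p c : ι → α} {i : ι}
    (hc : ∀ j, j ≠ i → c j ≠ p j) :
    {q | ∀ k, k ≠ i → q k = c k} ∩ singularHyperplane p = {Function.update c i (p i)} := by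
  ext q
  constructor
  · rintro ⟨hqc, j, hj⟩
    obtain rfl : j = i := by_contra fun hji => hc j hji (hqc j hji ▸ hj)
    ext k
    rcases eq_or_ne k j with rfl | hk
    · simpa using hj
    · simpa [hk] using hqc k hk
  · rintro rfl
    exact ⟨fun k hk => Function.update_of_ne hk _ _, i, Function.update_self i (p i) c⟩

theorem line_subset_or_inter_singularHyperplane_eq_singleton [DecidableEq ι] (p c : ι → α)
    (i : ι) :
    {q | ∀ k, k ≠ i → q k = c k} ⊆ singularHyperplane p ∨
      ∃ x, {q | ∀ k, k ≠ i → q k = c k} ∩ singularHyperplane p = {x} := by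
  by_cases h : ∃ j, j ≠ i ∧ c j = p j
  · obtain ⟨j, hji, hj⟩ := h
    exact .inl (line_subset_singularHyperplane hji hj)
  · push Not at h
    exact .inr ⟨_, line_inter_singularHyperplane_eq h⟩

end

/-- The set of points differing from a fixed point `p` in at most 2 coordinates
is a geometric hyperplane of `S_3(3)`: it is proper, and every line either lies
fully in it or meets it in exactly one point. -/
theorem cube_singular_is_hyperplane (p : Fin 3 → Fin 4) :
    ({q : Fin 3 → Fin 4 |
        (Finset.univ.filter fun j => q j ≠ p j).card ≤ 2} ≠ Set.univ) ∧
    ∀ L : Set (Fin 3 → Fin 4), CubeIsLine L →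
      L ⊆ {q | (Finset.univ.filter fun j => q j ≠ p j).card ≤ 2} ∨
      (L ∩ {q | (Finset.univ.filter fun j => q j ≠ p j).card ≤ 2}).ncard = 1 := by
  have hH : {q : Fin 3 → Fin 4 | (Finset.univ.filter fun j => q j ≠ p j).card ≤ 2} =
      singularHyperplane p := by
    ext q
    exact Nat.lt_succ_iff.symm.trans hammingDist_lt_card_iff_exists_eq
  rw [hH]
  refine ⟨singularHyperplane_ne_univ p, ?_⟩
  rintro L ⟨i, c, rfl⟩
  refine (line_subset_or_inter_singularHyperplane_eq_singleton p c i).imp_right ?_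
  rintro ⟨x, hx⟩
  rw [hx, Set.ncard_singleton]
end

section
/- If H' and H'' are geometric hyperplanes of a partial linear space C in which every line has exactly 3 points, then H' ⊕ H'' := (H' ∩ H'') ∪ (C \ (H' ∪ H'')) is again a geometric hyperplane of C (or equals all of C), i.e. every line of C either lies in H' ⊕ H'' or meets it in exactly one point. -/
/-!
On a line with three points the hyperplane condition says exactly that the line meets the set
in an odd number of points. Over `𝔽₂` the indicator of `H' ⊕ H'' = H' ⇔ H''` is
`1 + 1_{H'} + 1_{H''}`, so summing over a line `L` gives
`|L ∩ (H' ⊕ H'')| ≡ |L| + |L ∩ H'| + |L ∩ H''| ≡ 1 + 1 + 1 (mod 2)`.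
-/

open scoped symmDiff

namespace Set

variable {α : Type*}

theorem inter_union_compl_union_eq_bihimp (t u : Set α) : (t ∩ u) ∪ (t ∪ u)ᶜ = t ⇔ u := by
  ext x
  simp only [mem_union, mem_inter_iff, mem_compl_iff, mem_bihimp_iff]
  tauto

theorem ncard_inter_bihimp_modEq {s : Set α} (hs : s.Finite) (t u : Set α) :
    (s ∩ (t ⇔ u)).ncard ≡ s.ncard + (s ∩ t).ncard + (s ∩ u).ncard [MOD 2] := by
  classical
  lift s to Finset α using hs
  have hcard (v : Set α) : ((s : Set α) ∩ v).ncard = (s.filter (· ∈ v)).card := by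
    rw [← ncard_coe_finset, Finset.coe_filter]
    rfl
  rw [← ZMod.natCast_eq_natCast_iff, hcard, hcard, hcard, ncard_coe_finset]
  simp only [Nat.cast_add, Finset.natCast_card_filter]
  rw [Finset.cast_card, ← Finset.sum_add_distrib, ← Finset.sum_add_distrib]
  refine Finset.sum_congr rfl fun x _ => ?_
  by_cases ht : x ∈ t <;> by_cases hu : x ∈ u <;> simp [ht, hu] <;> decide

theorem subset_or_ncard_inter_eq_one_iff_odd {s : Set α} (hs : s.ncard = 3) (t : Set α) :
    (s ⊆ t ∨ (s ∩ t).ncard = 1) ↔ Odd (s ∩ t).ncard := by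
  have hfin : s.Finite := finite_of_ncard_ne_zero (by omega)
  have hle : (s ∩ t).ncard ≤ 3 := hs ▸ ncard_le_ncard inter_subset_left hfin
  constructor
  · rintro (hst | h1)
    · rw [inter_eq_left.mpr hst, hs]
      decide
    · rw [h1]
      decide
  · intro hodd
    obtain h | h : (s ∩ t).ncard = 1 ∨ (s ∩ t).ncard = 3 := by
      obtain ⟨k, hk⟩ := hodd
      omega
    · exact Or.inr h
    · exact Or.inl (inter_eq_left.mp (eq_of_subset_of_ncard_le inter_subset_left (by omega) hfin))

end Set

theorem veldkamp_sum_is_hyperplane_general {P : Type*} (Lines : Set (Set P))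
    (h3 : ∀ L ∈ Lines, L.ncard = 3)
    (H' H'' : Set P)
    (hH' : ∀ L ∈ Lines, L ⊆ H' ∨ (L ∩ H').ncard = 1)
    (hH'' : ∀ L ∈ Lines, L ⊆ H'' ∨ (L ∩ H'').ncard = 1) :
    ∀ L ∈ Lines, L ⊆ (H' ∩ H'') ∪ (H' ∪ H'')ᶜ ∨
      (L ∩ ((H' ∩ H'') ∪ (H' ∪ H'')ᶜ)).ncard = 1 := by
  intro L hL
  have hL3 := h3 L hL
  have hLfin : L.Finite := Set.finite_of_ncard_ne_zero (by omega)
  have hoddH' := (Set.subset_or_ncard_inter_eq_one_iff_odd hL3 H').mp (hH' L hL)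
  have hoddH'' := (Set.subset_or_ncard_inter_eq_one_iff_odd hL3 H'').mp (hH'' L hL)
  rw [Set.inter_union_compl_union_eq_bihimp, Set.subset_or_ncard_inter_eq_one_iff_odd hL3]
  rw [Nat.odd_iff] at hoddH' hoddH'' ⊢
  rw [Set.ncard_inter_bihimp_modEq hLfin, hL3]
  omega

/-- If `H'` and `H''` are geometric hyperplanes of a partial linear space with
3 points per line, then `(H' ∩ H'') ∪ (P \ (H' ∪ H''))` again satisfies the
hyperplane line condition: every line lies in it or meets it in exactly one
point. -/
theorem veldkamp_sum_is_hyperplane {P : Type*} (Lines : Set (Set P))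
    (h3 : ∀ L ∈ Lines, L.ncard = 3)
    (hpl : ∀ L ∈ Lines, ∀ L' ∈ Lines, L ≠ L' → (L ∩ L').ncard ≤ 1)
    (H' H'' : Set P)
    (hH'p : H' ≠ Set.univ) (hH''p : H'' ≠ Set.univ)
    (hH' : ∀ L ∈ Lines, L ⊆ H' ∨ (L ∩ H').ncard = 1)
    (hH'' : ∀ L ∈ Lines, L ⊆ H'' ∨ (L ∩ H'').ncard = 1) :
    ∀ L ∈ Lines, L ⊆ (H' ∩ H'') ∪ (H' ∪ H'')ᶜ ∨
      (L ∩ ((H' ∩ H'') ∪ (H' ∪ H'')ᶜ)).ncard = 1 :=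
  veldkamp_sum_is_hyperplane_general Lines h3 H' H'' hH' hH''
end
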